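/- Let C : ℝ → ℝ be continuously differentiable with C(t) > 0 and suppose there exists t* with C'(t*) < 0. Then for every ε > 0 there exist t₁ < t₂ with t₂ − t₁ < ε and a continuously differentiable Q : [t₁, t₂] → ℝ with Q(t₁) = Q(t₂) = 0 such that ∫_{t₁}^{t₂} (Q(t)/C(t))·Q'(t) dt < 0. -/

import Mathlib

/-!
Integrating by parts, `∫ (Q/C) Q' = [Q²/(2C)] + ∫ C' Q²/(2C²)`. For `Q` vanishing at both ends of
a short interval around `t*` on which `C' < 0` (take the parabola `(t - t₁)(t₂ - t)`), the boundary
term drops out and the remaining integrand is negative wherever `Q ≠ 0`.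
-/

open Set Filter Topology MeasureTheory

theorem exists_Icc_subset_of_mem_nhds_of_sub_lt {x ε : ℝ} {s : Set ℝ} (hs : s ∈ 𝓝 x)
    (hε : 0 < ε) : ∃ a b, a < b ∧ b - a < ε ∧ Icc a b ⊆ s := by
  obtain ⟨r, hr, hrs⟩ := (nhds_basis_Icc_pos x).mem_iff.1 hs
  have hρ : 0 < min r (ε / 3) := lt_min hr (by linarith)
  refine ⟨x - min r (ε / 3), x + min r (ε / 3), by linarith, by linarith [min_le_right r (ε / 3)],
    (Icc_subset_Icc ?_ ?_).trans hrs⟩ <;> linarith [min_le_left r (ε / 3)]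

theorem integral_div_mul_eq_sub_add_integral {Q Q' C C' : ℝ → ℝ} {a b : ℝ}
    (hQ : ∀ t ∈ uIcc a b, HasDerivAt Q (Q' t) t) (hC : ∀ t ∈ uIcc a b, HasDerivAt C (C' t) t)
    (hQ' : ContinuousOn Q' (uIcc a b)) (hC' : ContinuousOn C' (uIcc a b))
    (hC0 : ∀ t ∈ uIcc a b, C t ≠ 0) :
    ∫ t in a..b, Q t / C t * Q' t =
      Q b ^ 2 / (2 * C b) - Q a ^ 2 / (2 * C a) + ∫ t in a..b, C' t * Q t ^ 2 / (2 * C t ^ 2) := by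
  have hQc : ContinuousOn Q (uIcc a b) := HasDerivAt.continuousOn hQ
  have hCc : ContinuousOn C (uIcc a b) := HasDerivAt.continuousOn hC
  set F' : ℝ → ℝ := fun t => Q t / C t * Q' t - C' t * Q t ^ 2 / (2 * C t ^ 2)
  have hF : ∀ t ∈ uIcc a b, HasDerivAt (fun t => Q t ^ 2 / (2 * C t)) (F' t) t := by
    intro t ht
    have hCt := hC0 t ht
    refine (((hQ t ht).pow 2).div ((hC t ht).const_mul 2) (by simpa)).congr_deriv ?_
    simp only [F', Pi.pow_apply]
    field_simp
    ring
  have hF'int : IntervalIntegrable F' volume a b := by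
    refine ContinuousOn.intervalIntegrable ?_
    fun_prop (disch := intro t ht; simpa using hC0 t ht)
  have hEint :
      IntervalIntegrable (fun t => C' t * Q t ^ 2 / (2 * C t ^ 2)) volume a b := by
    refine ContinuousOn.intervalIntegrable ?_
    fun_prop (disch := intro t ht; simpa using hC0 t ht)
  calc ∫ t in a..b, Q t / C t * Q' t
      = ∫ t in a..b, F' t + C' t * Q t ^ 2 / (2 * C t ^ 2) := by simp [F']
    _ = _ := by
      rw [intervalIntegral.integral_add hF'int hEint,
        intervalIntegral.integral_eq_sub_of_hasDerivAt hF hF'int]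

theorem integral_mul_sq_div_sq_neg {Q C C' : ℝ → ℝ} {a b : ℝ} (hab : a < b)
    (hQ : ContinuousOn Q (Icc a b)) (hC : ContinuousOn C (Icc a b))
    (hC' : ContinuousOn C' (Icc a b)) (hC0 : ∀ t ∈ Icc a b, C t ≠ 0)
    (hQ0 : ∀ t ∈ Ioo a b, Q t ≠ 0) (hC'neg : ∀ t ∈ Ioo a b, C' t < 0) :
    ∫ t in a..b, C' t * Q t ^ 2 / (2 * C t ^ 2) < 0 := by
  have hint : IntervalIntegrable (fun t => -(C' t * Q t ^ 2 / (2 * C t ^ 2))) volume a b := by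
    refine ContinuousOn.intervalIntegrable ?_
    rw [uIcc_of_le hab.le]
    fun_prop (disch := intro t ht; simpa using hC0 t ht)
  have hpos : ∀ t ∈ Ioo a b, 0 < -(C' t * Q t ^ 2 / (2 * C t ^ 2)) := by
    intro t ht
    have hCt := hC0 t (Ioo_subset_Icc_self ht)
    have hQt := hQ0 t ht
    rw [neg_pos]
    exact div_neg_of_neg_of_pos (mul_neg_of_neg_of_pos (hC'neg t ht) (by positivity))
      (by positivity)
  simpa using intervalIntegral.intervalIntegral_pos_of_pos_on hint hpos hab

theorem stmt_12 (C : ℝ → ℝ) (hC : ContDiff ℝ 1 C) (hCpos : ∀ t, 0 < C t)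
    (tstar : ℝ) (hneg : deriv C tstar < 0) :
    ∀ ε > (0:ℝ), ∃ t₁ t₂ : ℝ, t₁ < t₂ ∧ t₂ - t₁ < ε ∧
      ∃ Q : ℝ → ℝ, ContDiff ℝ 1 Q ∧ Q t₁ = 0 ∧ Q t₂ = 0 ∧
        (∫ t in t₁..t₂, (Q t / C t) * deriv Q t) < 0 := by
  intro ε hε
  have hU : {t | deriv C t < 0} ∈ 𝓝 tstar :=
    (isOpen_lt hC.continuous_deriv_one continuous_const).mem_nhds hneg
  obtain ⟨a, b, hab, hba, hCdec⟩ := exists_Icc_subset_of_mem_nhds_of_sub_lt hU hε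
  set Q : ℝ → ℝ := fun t => (t - a) * (b - t)
  have hQ : ContDiff ℝ 1 Q := by fun_prop
  refine ⟨a, b, hab, hba, Q, hQ, by simp [Q], by simp [Q], ?_⟩
  have hderiv {f : ℝ → ℝ} (hf : ContDiff ℝ 1 f) : ∀ t ∈ uIcc a b, HasDerivAt f (deriv f t) t :=
    fun t _ => (hf.differentiable one_ne_zero t).hasDerivAt
  rw [integral_div_mul_eq_sub_add_integral (hderiv hQ) (hderiv hC)
    hQ.continuous_deriv_one.continuousOn hC.continuous_deriv_one.continuousOn
    (fun t _ => (hCpos t).ne')]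
  have hboundary : Q b ^ 2 / (2 * C b) - Q a ^ 2 / (2 * C a) = 0 := by simp [Q]
  rw [hboundary, zero_add]
  exact integral_mul_sq_div_sq_neg hab hQ.continuous.continuousOn hC.continuous.continuousOn
    hC.continuous_deriv_one.continuousOn (fun t _ => (hCpos t).ne')
    (fun t ht => (mul_pos (sub_pos.2 ht.1) (sub_pos.2 ht.2)).ne')
    (fun t ht => hCdec (Ioo_subset_Icc_self ht))
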